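/- Let (G,P,δ) be a symmetric homogeneous Garside structure of finite type with set of atoms 𝒜; if max(k,l) ≥ 2 assume in addition that the structure is square free. Fix atoms x,y and integers k,l ≥ 1. If X ∈ 𝒬_min(X) and len_𝒬(X) > 0, then the left normal form of X is δ^{-n}·A_n·…·A₁·x₁^k·B₁·…·B_n·y₁^l, where n = len_𝒬(X), x₁ ∈ x^G ∩ 𝒜, y₁ ∈ y^G ∩ 𝒜, and A_i, B_i are simple elements satisfying A_i δ^{i-1} B_i = δ^i for i = 1,…,n. -/

import Mathlib

/-- A Garside structure `(G, P, Δ)` on a group `G`: `P` is the submonoid of positive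
elements, `Δ` the Garside element.  The axioms (G1)-(G4) are stated below:
the prefix relation `a ≼ b ⟺ a⁻¹b ∈ P` is a lattice order (with gcd `wedge` and
lcm `vee`), the simple elements `[1,Δ]` generate `G`, conjugation by `Δ` preserves `P`,
and every nontrivial positive element has finite letter length. -/
structure GarsideStructure (G : Type*) [Group G] where
  P : Set G
  one_mem : (1 : G) ∈ P
  mul_mem : ∀ {a b : G}, a ∈ P → b ∈ P → a * b ∈ P
  inter_inv : ∀ a : G, a ∈ P → a⁻¹ ∈ P → a = 1
  Δ : G
  Δ_mem : Δ ∈ P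
  wedge : G → G → G
  vee : G → G → G
  wedge_le_left : ∀ a b : G, (wedge a b)⁻¹ * a ∈ P
  wedge_le_right : ∀ a b : G, (wedge a b)⁻¹ * b ∈ P
  le_wedge : ∀ a b c : G, c⁻¹ * a ∈ P → c⁻¹ * b ∈ P → c⁻¹ * wedge a b ∈ P
  le_vee_left : ∀ a b : G, a⁻¹ * vee a b ∈ P
  le_vee_right : ∀ a b : G, b⁻¹ * vee a b ∈ P
  vee_le : ∀ a b c : G, a⁻¹ * c ∈ P → b⁻¹ * c ∈ P → (vee a b)⁻¹ * c ∈ P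
  simples_generate : Subgroup.closure {a : G | a ∈ P ∧ a⁻¹ * Δ ∈ P} = ⊤
  conj_mem : ∀ a : G, a ∈ P → Δ⁻¹ * a * Δ ∈ P
  len_bdd : ∀ X : G, X ∈ P → X ≠ 1 →
    BddAbove {k : ℕ | ∃ w : List G, w.length = k ∧ (∀ a ∈ w, a ∈ P ∧ a ≠ 1) ∧ w.prod = X}

namespace GarsideStructure

variable {G : Type*} [Group G] (S : GarsideStructure G)

/-- The prefix order `a ≼ b`. -/
def le (a b : G) : Prop := a⁻¹ * b ∈ S.P

/-- Strict prefix order `a ≺ b`. -/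
def lt (a b : G) : Prop := S.le a b ∧ a ≠ b

/-- The suffix relation `a ≽ b ⟺ ab⁻¹ ∈ P`. -/
def ges (a b : G) : Prop := a * b⁻¹ ∈ S.P

/-- Simple elements: the interval `[1, Δ]`. -/
def IsSimple (a : G) : Prop := a ∈ S.P ∧ S.le a S.Δ

/-- Atoms: elements of `P \ {1}` that are not products of two elements of `P \ {1}`. -/
def IsAtom' (a : G) : Prop := a ∈ S.P ∧ a ≠ 1 ∧
  ¬ ∃ b c : G, b ∈ S.P ∧ b ≠ 1 ∧ c ∈ S.P ∧ c ≠ 1 ∧ a = b * c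

/-- The letter length `‖X‖` of a positive element. -/
noncomputable def norm (X : G) : ℕ :=
  sSup {k : ℕ | ∃ w : List G, w.length = k ∧ (∀ a ∈ w, a ∈ S.P ∧ a ≠ 1) ∧ w.prod = X}

/-- Finite type: finitely many simple elements. -/
def FiniteType : Prop := {a : G | S.IsSimple a}.Finite

/-- Homogeneous: the letter length is additive on `P`. -/
def Homogeneous : Prop := ∀ X ∈ S.P, ∀ Y ∈ S.P, S.norm (X * Y) = S.norm X + S.norm Y

/-- Symmetric: for simple `u, v`, `u ≼ v ⟺ v ≽ u`. -/
def IsSymmetric : Prop := ∀ u v : G, S.IsSimple u → S.IsSimple v → (S.le u v ↔ S.ges v u)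

/-- Square free: no simple element contains the square of an atom. -/
def SquareFree : Prop := ∀ a : G, S.IsSimple a →
  ¬ ∃ U x V : G, U ∈ S.P ∧ S.IsAtom' x ∧ V ∈ S.P ∧ a = U * x ^ 2 * V

/-- The right complement `∂A = A⁻¹Δ`. -/
def dl (A : G) : G := A⁻¹ * S.Δ

/-- `τ(X) = Δ⁻¹XΔ`. -/
def tau (X : G) : G := S.Δ⁻¹ * X * S.Δ

/-- The product `A·B` of simple elements is left weighted if `A = (AB) ∧ Δ`. -/
def LeftWeighted (A B : G) : Prop := A = S.wedge (A * B) S.Δ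

/-- The gcd for the suffix order `≽` (derived from the lcm for `≼`). -/
def rwedge (a b : G) : G := (S.vee a⁻¹ b⁻¹)⁻¹

/-- The product `A·B` of simple elements is right weighted if `B = (AB) ∧̃ Δ`. -/
def RightWeighted (A B : G) : Prop := B = S.rwedge (A * B) S.Δ

end GarsideStructure
/-- A Garside structure together with the (unique) left normal form of each element:
`X = Δ^(nfInf X) · (nfWord X)`, where the factors of `nfWord X` are simple elements
different from `1` and `Δ` and each consecutive pair is left weighted. -/
structure GarsideStructureNF (G : Type*) [Group G] extends GarsideStructure G where
  nfInf : G → ℤ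
  nfWord : G → List G
  nf_factors : ∀ X : G, ∀ a ∈ nfWord X,
    toGarsideStructure.IsSimple a ∧ a ≠ 1 ∧ a ≠ Δ
  nf_chain : ∀ X : G, List.Chain' toGarsideStructure.LeftWeighted (nfWord X)
  nf_prod : ∀ X : G, X = Δ ^ nfInf X * (nfWord X).prod
  nf_unique : ∀ (X : G) (p : ℤ) (w : List G),
    (∀ a ∈ w, toGarsideStructure.IsSimple a ∧ a ≠ 1 ∧ a ≠ Δ) →
    List.Chain' toGarsideStructure.LeftWeighted w →
    X = Δ ^ p * w.prod → p = nfInf X ∧ w = nfWord X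

namespace GarsideStructureNF

variable {G : Type*} [Group G] (S : GarsideStructureNF G)

/-- The infimum `inf X` of `X`: the power of `Δ` in the left normal form. -/
def inf (X : G) : ℤ := S.nfInf X

/-- The canonical length `ℓ(X)`. -/
def ell (X : G) : ℕ := (S.nfWord X).length

/-- The initial factor `ι(X) = τ^{-p}(A₁)`. -/
def iota (X : G) : G := S.Δ ^ S.nfInf X * (S.nfWord X).headD 1 * S.Δ ^ (-S.nfInf X)

/-- The final factor `φ(X) = A_r`. -/
def phi (X : G) : G := (S.nfWord X).getLastD 1

/-- The preferred prefix `𝔭(X) = ι(X) ∧ ∂(φ(X))`. -/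
def pp (X : G) : G := S.wedge (S.iota X) ((S.phi X)⁻¹ * S.Δ)

/-- Cyclic sliding `𝔰(X) = 𝔭(X)⁻¹ X 𝔭(X)` (and `𝔰(X) = X` when `ℓ(X) = 0`). -/
def sliding (X : G) : G := if S.ell X = 0 then X else (S.pp X)⁻¹ * X * S.pp X

/-- Cycling `c(X) = ι(X)⁻¹ X ι(X)` (and `c(X) = X` when `ℓ(X) = 0`). -/
def cycling (X : G) : G := if S.ell X = 0 then X else (S.iota X)⁻¹ * X * S.iota X

/-- Decycling `d(X) = φ(X) X φ(X)⁻¹` (and `d(X) = X` when `ℓ(X) = 0`). -/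
def decycling (X : G) : G := if S.ell X = 0 then X else S.phi X * X * (S.phi X)⁻¹

/-- The set of sliding circuits `SC(X) = {Y ∈ X^G | 𝔰^m(Y) = Y for some m > 0}`. -/
def SC (X : G) : Set G := {Y : G | IsConj X Y ∧ ∃ m : ℕ, 0 < m ∧ S.sliding^[m] Y = Y}

/-- `s` is an SC-minimal conjugator for `X`. -/
def SCMinConj (X s : G) : Prop :=
  s ∈ S.P ∧ s ≠ 1 ∧ s⁻¹ * X * s ∈ S.SC X ∧
  ∀ t : G, S.lt 1 t → S.lt t s → t⁻¹ * X * t ∉ S.SC X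

/-- The summit infimum `inf_s X = max {inf Y | Y ∈ X^G}`. -/
noncomputable def infS (X : G) : ℤ := sSup {p : ℤ | ∃ Y : G, IsConj X Y ∧ p = S.nfInf Y}

/-- The summit length `ℓ_s(X) = min {ℓ(Y) | Y ∈ X^G}`. -/
noncomputable def ellS (X : G) : ℕ := sInf {r : ℕ | ∃ Y : G, IsConj X Y ∧ r = S.ell Y}

end GarsideStructureNF
/-- The set `𝒬_m = {P⁻¹ x₁^k P y₁^l | ℓ(P) ≤ m, x₁ ∈ x^G ∩ 𝒜, y₁ ∈ y^G ∩ 𝒜}`. -/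
def Qset {G : Type*} [Group G] (S : GarsideStructureNF G) (x y : G) (k l : ℕ)
    (m : ℕ) : Set G :=
  {Z : G | ∃ Pp x₁ y₁ : G, S.ell Pp ≤ m ∧
    S.IsAtom' x₁ ∧ IsConj x x₁ ∧ S.IsAtom' y₁ ∧ IsConj y y₁ ∧
    Z = Pp⁻¹ * x₁ ^ k * Pp * y₁ ^ l}

/-- `len_𝒬(X) = min {m | 𝒬_m ∩ X^G ≠ ∅}`. -/
noncomputable def lenQ {G : Type*} [Group G] (S : GarsideStructureNF G) (x y : G)
    (k l : ℕ) (X : G) : ℕ :=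
  sInf {m : ℕ | ∃ Z ∈ Qset S x y k l m, IsConj X Z}

/-- `𝒬_min(X) = 𝒬_n ∩ X^G` where `n = len_𝒬(X)`. -/
noncomputable def Qmin {G : Type*} [Group G] (S : GarsideStructureNF G) (x y : G)
    (k l : ℕ) (X : G) : Set G :=
  {Z ∈ Qset S x y k l (lenQ S x y k l X) | IsConj X Z}

/-!
Among all expressions `X = Q⁻¹ x₁ᵏ Q y₁ˡ` with `ℓ(Q) ≤ n = len_𝒬(X)`, the `Δ`-power of `Q` can be
absorbed into `x₁`, so `Q` may be taken positive, and then of least letter length `‖Q‖`. This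
minimality forces `inf Q = 0` and, for the left normal form `Q = B₁ ⋯ B_r`, that `x₁ ∧ B₁ = 1` and
that `x₁ · B₁` is left weighted: otherwise a nontrivial prefix of `Q` could be moved onto `x₁`,
symmetry and homogeneity keeping the conjugate of `x₁` an atom. Minimality of `n` forces
`B_r · y₁` to be left weighted (otherwise `B_r` could be moved onto `y₁`, giving an element of
`𝒬_{r-1}` conjugate to `X`), and `r = n`. Now `Q⁻¹ = Δ⁻ⁿ A_n ⋯ A₁` with `A_i = τ⁻ⁱ(∂B_i)`; each
`A_{i+1} · A_i` is left weighted because `B_i · B_{i+1}` is, `A₁ · x₁` is because `∂A₁ = B₁`, and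
square-freeness makes `x₁ · x₁` and `y₁ · y₁` left weighted. So the word is the left normal form.
-/

theorem isChain_replicate_of_two_le {α : Type*} {R : α → α → Prop} {a : α} {n : ℕ}
    (h : 2 ≤ n → R a a) : (List.replicate n a).IsChain R := by
  rcases Nat.lt_or_ge n 2 with hn | hn
  · interval_cases n <;> simp
  · exact List.isChain_replicate_of_rel n (h hn)

namespace GarsideStructure

variable {G : Type*} [Group G] (S : GarsideStructure G) {a b c : G}

protected theorem le_refl (a : G) : S.le a a := by
  simpa [GarsideStructure.le] using S.one_mem

protected theorem le_trans (hab : S.le a b) (hbc : S.le b c) : S.le a c := by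
  simpa [GarsideStructure.le, mul_assoc] using S.mul_mem hab hbc

protected theorem le_antisymm (hab : S.le a b) (hba : S.le b a) : a = b := by
  have h := S.inter_inv _ hab (by simpa [GarsideStructure.le] using hba)
  rw [inv_mul_eq_one] at h
  exact h

theorem mul_le_mul_iff_left : S.le (c * a) (c * b) ↔ S.le a b := by
  simp [GarsideStructure.le, mul_assoc]

theorem one_le_iff : S.le 1 a ↔ a ∈ S.P := by
  simp [GarsideStructure.le]

theorem le_mul_of_mem (hb : b ∈ S.P) : S.le a (a * b) := by
  simpa [GarsideStructure.le] using hb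

theorem eq_one_of_le_one (ha : a ∈ S.P) (h : S.le a 1) : a = 1 :=
  S.inter_inv a ha (by simpa [GarsideStructure.le] using h)

theorem eq_one_or_eq_of_le_isAtom' (ha : S.IsAtom' a) (hb : b ∈ S.P) (hba : S.le b a) :
    b = 1 ∨ b = a := by
  by_contra! h
  exact ha.2.2 ⟨b, b⁻¹ * a, hb, h.1, hba, by rw [Ne, inv_mul_eq_one]; exact h.2, by group⟩

theorem wedge_eq_of_forall_le (hca : S.le c a) (hcb : S.le c b)
    (h : ∀ d, S.le d a → S.le d b → S.le d c) : S.wedge a b = c :=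
  S.le_antisymm (h _ (S.wedge_le_left a b) (S.wedge_le_right a b)) (S.le_wedge a b c hca hcb)

theorem wedge_comm (a b : G) : S.wedge a b = S.wedge b a :=
  S.wedge_eq_of_forall_le (S.wedge_le_right b a) (S.wedge_le_left b a)
    fun d hda hdb => S.le_wedge b a d hdb hda

theorem wedge_mem (ha : a ∈ S.P) (hb : b ∈ S.P) : S.wedge a b ∈ S.P :=
  (S.one_le_iff).1 (S.le_wedge a b 1 ((S.one_le_iff).2 ha) ((S.one_le_iff).2 hb))

theorem wedge_eq_wedge_wedge_of_le (hbc : S.le b c) :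
    S.wedge a b = S.wedge (S.wedge a c) b :=
  S.wedge_eq_of_forall_le
    (S.le_trans (S.wedge_le_left _ _) (S.wedge_le_left _ _)) (S.wedge_le_right _ _)
    fun _ hda hdb => S.le_wedge _ _ _ (S.le_wedge _ _ _ hda (S.le_trans hdb hbc)) hdb

theorem wedge_eq_one_of_le (ha : a ∈ S.P) (hc : c ∈ S.P) (hab : S.le a b)
    (h : S.wedge b c = 1) : S.wedge a c = 1 :=
  S.eq_one_of_le_one (S.wedge_mem ha hc)
    (h ▸ S.le_wedge _ _ _ (S.le_trans (S.wedge_le_left _ _) hab) (S.wedge_le_right _ _))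

theorem isSimple_delta : S.IsSimple S.Δ := ⟨S.Δ_mem, S.le_refl _⟩

theorem mul_dl (a : G) : a * S.dl a = S.Δ := by simp [GarsideStructure.dl]

theorem isSimple_dl (ha : S.IsSimple a) : S.IsSimple (S.dl a) :=
  ⟨ha.2, by simpa [GarsideStructure.le, GarsideStructure.dl, mul_assoc] using S.conj_mem a ha.1⟩

theorem le_dl_iff : S.le b (S.dl a) ↔ S.le (a * b) S.Δ := by
  simp [GarsideStructure.le, GarsideStructure.dl, mul_assoc]

theorem isSimple_conj_delta_inv (ha : S.IsSimple a) : S.IsSimple (S.Δ⁻¹ * a * S.Δ) :=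
  ⟨S.conj_mem a ha.1, by
    simpa [GarsideStructure.le, mul_assoc] using S.conj_mem _ ha.2⟩

theorem wedge_mul_delta (ha : S.IsSimple a) (hb : b ∈ S.P) :
    S.wedge (a * b) S.Δ = a * S.wedge b (S.dl a) := by
  refine S.wedge_eq_of_forall_le ((S.mul_le_mul_iff_left).2 (S.wedge_le_left _ _))
    (by simpa [S.mul_dl] using
      (S.mul_le_mul_iff_left (c := a)).2 (S.wedge_le_right b (S.dl a)))
    fun d hd1 hd2 => ?_
  -- `e = a ∨ d` is a common multiple of `a` and `d` below `a·b` and `Δ`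
  set e := S.vee a d
  have hea : a * (a⁻¹ * e) = e := by group
  have hab : S.le (a⁻¹ * e) b := by
    rw [← S.mul_le_mul_iff_left (c := a), hea]
    exact S.vee_le _ _ _ (S.le_mul_of_mem hb) hd1
  have hadl : S.le (a⁻¹ * e) (S.dl a) := by
    rw [← S.mul_le_mul_iff_left (c := a), hea, S.mul_dl]
    exact S.vee_le _ _ _ ha.2 hd2
  have he := (S.mul_le_mul_iff_left (c := a)).2 (S.le_wedge _ _ _ hab hadl)
  rw [hea] at he
  exact S.le_trans (S.le_vee_right a d) he

theorem leftWeighted_iff (ha : S.IsSimple a) (hb : b ∈ S.P) :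
    S.LeftWeighted a b ↔ S.wedge b (S.dl a) = 1 := by
  rw [GarsideStructure.LeftWeighted, S.wedge_mul_delta ha hb, left_eq_mul]

theorem prod_mem {w : List G} (hw : ∀ a ∈ w, a ∈ S.P) : w.prod ∈ S.P := by
  induction w with
  | nil => exact S.one_mem
  | cons a w ih =>
    simp only [List.mem_cons, forall_eq_or_imp] at hw
    exact S.mul_mem hw.1 (ih hw.2)

theorem prod_ne_one {w : List G} (hne : w ≠ []) (hw : ∀ a ∈ w, a ∈ S.P ∧ a ≠ 1) :
    w.prod ≠ 1 := by
  obtain ⟨a, w, rfl⟩ := List.exists_cons_of_ne_nil hne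
  simp only [List.mem_cons, forall_eq_or_imp] at hw
  intro h
  refine hw.1.2 (S.inter_inv a hw.1.1 ?_)
  rw [List.prod_cons, mul_eq_one_iff_inv_eq] at h
  exact h ▸ S.prod_mem fun b hb => (hw.2 b hb).1

theorem norm_one : S.norm 1 = 0 :=
  IsGreatest.csSup_eq ⟨⟨[], by simp⟩, fun k ⟨w, hk, hw, h1⟩ => by
    by_contra hk0
    exact S.prod_ne_one (by rintro rfl; simp_all) hw h1⟩

theorem one_le_norm (ha : a ∈ S.P) (ha1 : a ≠ 1) : 1 ≤ S.norm a :=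
  le_csSup (S.len_bdd a ha ha1) ⟨[a], by simp [ha, ha1]⟩

theorem norm_eq_one_of_isAtom' (ha : S.IsAtom' a) : S.norm a = 1 :=
  IsGreatest.csSup_eq ⟨⟨[a], by simp [ha.1, ha.2.1]⟩, fun k ⟨w, hk, hw, hwa⟩ => by
    subst hk
    match w, hw, hwa with
    | [], _, _ => simp
    | [_], _, _ => simp
    | b :: c :: t, hw, hwa =>
      have hct : ∀ d ∈ c :: t, d ∈ S.P ∧ d ≠ 1 := fun d hd => hw d (List.mem_cons_of_mem b hd)
      exact absurd ⟨b, (c :: t).prod, (hw b (by simp)).1, (hw b (by simp)).2,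
        S.prod_mem fun d hd => (hct d hd).1, S.prod_ne_one (by simp) hct, hwa.symm⟩ ha.2.2⟩

theorem isAtom'_iff_norm_eq_one (hhom : S.Homogeneous) (ha : a ∈ S.P) :
    S.IsAtom' a ↔ S.norm a = 1 := by
  refine ⟨S.norm_eq_one_of_isAtom', fun hn => ⟨ha, ?_, ?_⟩⟩
  · rintro rfl
    simp [S.norm_one] at hn
  · rintro ⟨b, c, hb, hb1, hc, hc1, rfl⟩
    have := hhom b hb c hc
    have := S.one_le_norm hb hb1
    have := S.one_le_norm hc hc1
    omega

theorem norm_lt_norm_mul (hhom : S.Homogeneous) (ha : a ∈ S.P) (ha1 : a ≠ 1) (hb : b ∈ S.P) :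
    S.norm b < S.norm (a * b) := by
  have := S.one_le_norm ha ha1
  rw [hhom a ha b hb]
  omega

theorem isAtom'_iff_of_semiconjBy (hhom : S.Homogeneous) {w z : G} (h : SemiconjBy a w z)
    (ha : a ∈ S.P) (hw : w ∈ S.P) (hz : z ∈ S.P) : S.IsAtom' w ↔ S.IsAtom' z := by
  have := hhom a ha w hw
  rw [h.eq, hhom z hz a ha] at this
  rw [S.isAtom'_iff_norm_eq_one hhom hw, S.isAtom'_iff_norm_eq_one hhom hz]
  omega

theorem wedge_prod_delta_eq_head {w : List G} (hne : w ≠ []) (hs : ∀ a ∈ w, S.IsSimple a)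
    (hc : w.IsChain S.LeftWeighted) : S.wedge w.prod S.Δ = w.head hne := by
  induction w with
  | nil => contradiction
  | cons a t ih =>
    simp only [List.mem_cons, forall_eq_or_imp] at hs
    rw [List.prod_cons, S.wedge_mul_delta hs.1 (S.prod_mem fun b hb => (hs.2 b hb).1),
      List.head_cons, mul_eq_left]
    cases t with
    | nil =>
      exact S.eq_one_of_le_one (S.wedge_mem S.one_mem (S.isSimple_dl hs.1).1)
        (S.wedge_le_left _ _)
    | cons b t =>
      rw [S.wedge_eq_wedge_wedge_of_le (S.isSimple_dl hs.1).2,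
        ih (List.cons_ne_nil b t) hs.2 hc.tail, List.head_cons,
        ← S.leftWeighted_iff hs.1 (hs.2 b (by simp)).1]
      exact (List.isChain_cons_cons.1 hc).1

theorem exists_simples_prod_eq_inv_mul {ss : List G} (hss : ∀ s ∈ ss, S.IsSimple s)
    {u : G} (hu : u ∈ S.P) (hus : S.le u ss.prod) :
    ∃ ts : List G, (∀ t ∈ ts, S.IsSimple t) ∧ ts.length ≤ ss.length ∧
      ts.prod = u⁻¹ * ss.prod := by
  induction ss generalizing u with
  | nil => exact ⟨[], by simp, by simp, by simp [S.eq_one_of_le_one hu hus]⟩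
  | cons s Y ih =>
    simp only [List.mem_cons, forall_eq_or_imp] at hss
    rw [List.prod_cons] at hus ⊢
    -- split `u⁻¹ s Y` at the lcm `e = u ∨ s`: the first factor `u⁻¹ e` is simple
    set e := S.vee u s
    have hsuΔ : S.le s (u * S.Δ) := by
      have h := S.mul_mem hss.1.2 (S.conj_mem u hu)
      simpa [GarsideStructure.le, mul_assoc] using h
    have heuΔ : S.le (u⁻¹ * e) S.Δ := by
      rw [← S.mul_le_mul_iff_left (c := u), mul_inv_cancel_left]
      exact S.vee_le _ _ _ (S.le_mul_of_mem S.Δ_mem) hsuΔ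
    have hesY : S.le (s⁻¹ * e) Y.prod := by
      rw [← S.mul_le_mul_iff_left (c := s), mul_inv_cancel_left]
      exact S.vee_le _ _ _ hus (S.le_mul_of_mem (S.prod_mem fun b hb => (hss.2 b hb).1))
    obtain ⟨ts, hts, hlen, hprod⟩ := ih hss.2 (S.le_vee_right u s) hesY
    refine ⟨(u⁻¹ * e) :: ts, ?_, by simpa using hlen, ?_⟩
    · simp only [List.mem_cons, forall_eq_or_imp]
      exact ⟨⟨S.le_vee_left u s, heuΔ⟩, hts⟩
    · rw [List.prod_cons, hprod]
      show u⁻¹ * e * ((s⁻¹ * e)⁻¹ * Y.prod) = u⁻¹ * (s * Y.prod)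
      group

theorem delta_ne_one_of_isAtom' (ha : S.IsAtom' a) : S.Δ ≠ 1 := by
  intro hΔ
  have hsimple : {a : G | a ∈ S.P ∧ a⁻¹ * S.Δ ∈ S.P} = {1} := by
    ext a
    simp only [Set.mem_ofPred_eq, Set.mem_singleton_iff, hΔ, mul_one]
    exact ⟨fun h => S.inter_inv a h.1 h.2, by rintro rfl; simpa using S.one_mem⟩
  have hgen := S.simples_generate
  rw [hsimple, Subgroup.closure_singleton_one] at hgen
  exact ha.2.1 (Subgroup.mem_bot.1 (hgen ▸ Subgroup.mem_top a))

theorem delta_pow_mem (n : ℕ) : S.Δ ^ n ∈ S.P := by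
  induction n with
  | zero => simpa using S.one_mem
  | succ n ih => simpa [pow_succ] using S.mul_mem ih S.Δ_mem

theorem delta_le_delta_zpow_mul {q : ℤ} (hq : 1 ≤ q) (hb : b ∈ S.P) :
    S.le S.Δ (S.Δ ^ q * b) := by
  obtain ⟨n, rfl⟩ : ∃ n : ℕ, q = n + 1 := ⟨(q - 1).toNat, by omega⟩
  have h : S.Δ⁻¹ * (S.Δ ^ ((n : ℤ) + 1) * b) = S.Δ ^ n * b := by
    rw [zpow_add_one, zpow_natCast, ← pow_succ, pow_succ', mul_assoc, inv_mul_cancel_left]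
  rw [GarsideStructure.le, h]
  exact S.mul_mem (S.delta_pow_mem n) hb

end GarsideStructure

namespace GarsideStructureNF

variable {G : Type*} [Group G] (S : GarsideStructureNF G) {a b X : G}

def IsNormalWord (w : List G) : Prop :=
  (∀ a ∈ w, S.IsSimple a ∧ a ≠ 1 ∧ a ≠ S.Δ) ∧ w.IsChain S.LeftWeighted

theorem isNormalWord_nfWord (X : G) : S.IsNormalWord (S.nfWord X) :=
  ⟨S.nf_factors X, S.nf_chain X⟩

theorem IsNormalWord.dropLast {w : List G} (hw : S.IsNormalWord w) :
    S.IsNormalWord w.dropLast :=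
  ⟨fun a ha => hw.1 a (List.dropLast_subset w ha), hw.2.prefix (List.dropLast_prefix w)⟩

theorem IsNormalWord.prod_mem {w : List G} (hw : S.IsNormalWord w) : w.prod ∈ S.P :=
  S.prod_mem fun a ha => (hw.1 a ha).1.1

theorem nf_eq {p : ℤ} {w : List G} (hw : S.IsNormalWord w) (hX : X = S.Δ ^ p * w.prod) :
    S.nfInf X = p ∧ S.nfWord X = w :=
  (S.nf_unique X p w hw.1 hw.2 hX).imp Eq.symm Eq.symm

theorem ell_eq_length {p : ℤ} {w : List G} (hw : S.IsNormalWord w)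
    (hX : X = S.Δ ^ p * w.prod) : S.ell X = w.length := by
  rw [ell, (S.nf_eq hw hX).2]

theorem ell_one : S.ell 1 = 0 :=
  S.ell_eq_length (p := 0) (w := []) ⟨by simp, List.isChain_nil⟩ (by simp)

theorem prod_nfWord_of_nfInf_eq_zero (hX : S.nfInf X = 0) : (S.nfWord X).prod = X := by
  conv_rhs => rw [S.nf_prod X, hX, zpow_zero, one_mul]

theorem nfWord_head_le (hX : S.nfInf X = 0) (hne : S.nfWord X ≠ []) :
    S.le ((S.nfWord X).head hne) X := by
  have h := S.le_mul_of_mem (a := (S.nfWord X).head hne)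
    (S.prod_mem fun a ha => (S.nf_factors X a (List.mem_of_mem_tail ha)).1.1)
  rwa [← List.prod_cons, List.cons_head_tail, S.prod_nfWord_of_nfInf_eq_zero hX] at h

theorem not_delta_le_prod (hΔ : S.Δ ≠ 1) {w : List G} (hw : S.IsNormalWord w) :
    ¬ S.le S.Δ w.prod := by
  intro hle
  cases w with
  | nil => exact hΔ (S.eq_one_of_le_one S.Δ_mem hle)
  | cons a t =>
    have ha := hw.1 a List.mem_cons_self
    have hhead := S.wedge_prod_delta_eq_head (List.cons_ne_nil a t)
      (fun b hb => (hw.1 b hb).1) hw.2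
    rw [List.head_cons] at hhead
    exact ha.2.2 (S.le_antisymm ha.1.2 (hhead ▸ S.le_wedge _ _ _ hle (S.le_refl _)))

theorem nfInf_nonneg (hΔ : S.Δ ≠ 1) (hX : X ∈ S.P) : 0 ≤ S.nfInf X := by
  by_contra! hneg
  refine S.not_delta_le_prod hΔ (S.isNormalWord_nfWord X) ?_
  have hw : (S.nfWord X).prod = S.Δ ^ (-S.nfInf X) * X := by
    rw [zpow_neg, eq_inv_mul_iff_mul_eq, ← S.nf_prod X]
  rw [hw]
  exact S.delta_le_delta_zpow_mul (by omega) hX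

theorem wedge_delta_ne_one (hΔ : S.Δ ≠ 1) (hX : X ∈ S.P) (hX1 : X ≠ 1) :
    S.wedge X S.Δ ≠ 1 := by
  rcases (S.nfInf_nonneg hΔ hX).lt_or_eq with hpos | hzero
  · intro h
    have hle := S.delta_le_delta_zpow_mul hpos (S.isNormalWord_nfWord X).prod_mem
    rw [← S.nf_prod X] at hle
    exact hΔ (S.eq_one_of_le_one S.Δ_mem (h ▸ S.le_wedge _ _ _ hle (S.le_refl _)))
  · have hw := S.isNormalWord_nfWord X
    have hne : S.nfWord X ≠ [] := by
      intro h
      apply hX1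
      rw [← S.prod_nfWord_of_nfInf_eq_zero hzero.symm, h, List.prod_nil]
    rw [← S.prod_nfWord_of_nfInf_eq_zero hzero.symm,
      S.wedge_prod_delta_eq_head hne (fun b hb => (hw.1 b hb).1) hw.2]
    exact (hw.1 _ (List.head_mem hne)).2.1

theorem isSimple_of_isAtom' (ha : S.IsAtom' a) : S.IsSimple a := by
  have hΔ := S.delta_ne_one_of_isAtom' ha
  rcases S.eq_one_or_eq_of_le_isAtom' ha (S.wedge_mem ha.1 S.Δ_mem) (S.wedge_le_left a S.Δ)
    with h | h
  · exact absurd h (S.wedge_delta_ne_one hΔ ha.1 ha.2.1)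
  · exact ⟨ha.1, h ▸ S.wedge_le_right a S.Δ⟩

theorem exists_simples_prod_eq (hΔ : S.Δ ≠ 1) (hX : X ∈ S.P) :
    ∃ w : List G, (∀ a ∈ w, S.IsSimple a) ∧ w.prod = X := by
  obtain ⟨n, hn⟩ := Int.eq_ofNat_of_zero_le (S.nfInf_nonneg hΔ hX)
  refine ⟨List.replicate n S.Δ ++ S.nfWord X, ?_, ?_⟩
  · simp only [List.mem_append, List.mem_replicate]
    rintro a (⟨-, rfl⟩ | ha)
    exacts [S.isSimple_delta, (S.nf_factors X a ha).1]
  · rw [List.prod_append, List.prod_replicate, ← zpow_natCast, ← hn, ← S.nf_prod X]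

theorem exists_normalWord_mul_of_wedge_eq {h Y : G} (hh : S.IsSimple h) (hh1 : h ≠ 1)
    (hhead : S.wedge (h * Y) S.Δ = h) {q : ℕ} {w : List G} (hw : S.IsNormalWord w)
    (hY : Y = S.Δ ^ q * w.prod) :
    ∃ (q' : ℕ) (w' : List G), S.IsNormalWord w' ∧ h * Y = S.Δ ^ q' * w'.prod ∧
      q' + w'.length ≤ q + w.length + 1 := by
  by_cases hhΔ : h = S.Δ
  · exact ⟨q + 1, w, hw, by rw [hY, hhΔ, pow_succ', mul_assoc], by omega⟩
  have hq : q = 0 := by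
    by_contra hq
    have hΔY : S.le S.Δ Y := by
      rw [hY, ← zpow_natCast]
      exact S.delta_le_delta_zpow_mul (by omega) hw.prod_mem
    have hΔhΔ : S.le S.Δ (h * S.Δ) := by
      simpa [GarsideStructure.le, mul_assoc] using S.conj_mem h hh.1
    have hΔhY := S.le_trans hΔhΔ ((S.mul_le_mul_iff_left).2 hΔY)
    exact hhΔ (S.le_antisymm hh.2 (hhead ▸ S.le_wedge _ _ _ hΔhY (S.le_refl _)))
  subst hq
  rw [pow_zero, one_mul] at hY
  subst hY
  have hwedge : S.wedge w.prod (S.dl h) = 1 := by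
    rwa [S.wedge_mul_delta hh hw.prod_mem, mul_eq_left] at hhead
  refine ⟨0, h :: w, ⟨?_, List.isChain_cons.2 ⟨fun b hb => ?_, hw.2⟩⟩, by simp, by simp⟩
  · simp only [List.mem_cons, forall_eq_or_imp]
    exact ⟨⟨hh, hh1, hhΔ⟩, hw.1⟩
  · obtain ⟨t, rfl⟩ : ∃ t, w = b :: t := by
      cases w <;> simp_all
    have hb := (hw.1 b List.mem_cons_self).1
    rw [S.leftWeighted_iff hh hb.1]
    refine S.wedge_eq_one_of_le hb.1 (S.isSimple_dl hh).1 ?_ hwedge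
    rw [List.prod_cons]
    exact S.le_mul_of_mem (S.prod_mem fun c hc => (hw.1 c (List.mem_cons_of_mem b hc)).1.1)

theorem exists_normalWord_of_simples (hΔ : S.Δ ≠ 1) {ss : List G}
    (hss : ∀ s ∈ ss, S.IsSimple s) :
    ∃ (q : ℕ) (w : List G), S.IsNormalWord w ∧ ss.prod = S.Δ ^ q * w.prod ∧
      q + w.length ≤ ss.length := by
  induction hn : ss.length using Nat.strong_induction_on generalizing ss with
  | _ n ih =>
    subst hn
    cases ss with
    | nil => exact ⟨0, [], ⟨by simp, List.isChain_nil⟩, by simp, by simp⟩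
    | cons s rest =>
      simp only [List.mem_cons, forall_eq_or_imp] at hss
      set X := (s :: rest).prod
      have hX : X ∈ S.P := S.prod_mem fun a ha => by
        rcases List.mem_cons.1 ha with rfl | ha
        exacts [hss.1.1, (hss.2 a ha).1]
      by_cases hX1 : X = 1
      · exact ⟨0, [], ⟨by simp, List.isChain_nil⟩, by simpa using hX1, by simp⟩
      -- peel off the head `h = X ∧ Δ`; the rest `h⁻¹ X` is again a product of few simples
      set h := S.wedge X S.Δ
      have hh : S.IsSimple h := ⟨S.wedge_mem hX S.Δ_mem, S.wedge_le_right _ _⟩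
      have hsh : S.le s h :=
        S.le_wedge _ _ _ (S.le_mul_of_mem (S.prod_mem fun a ha => (hss.2 a ha).1)) hss.1.2
      have hrest : S.le (s⁻¹ * h) rest.prod := by
        rw [← S.mul_le_mul_iff_left (c := s), mul_inv_cancel_left, ← List.prod_cons]
        exact S.wedge_le_left _ _
      obtain ⟨ts, hts, hlen, hprod⟩ := S.exists_simples_prod_eq_inv_mul hss.2 hsh hrest
      obtain ⟨q, w, hw, hYw, hqw⟩ :=
        ih ts.length (by rw [List.length_cons]; omega) hts rfl
      have hY : ts.prod = h⁻¹ * X := by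
        rw [hprod, show X = s * rest.prod from List.prod_cons]
        group
      obtain ⟨q', w', hw', hXw', hqw'⟩ := S.exists_normalWord_mul_of_wedge_eq hh
        (S.wedge_delta_ne_one hΔ hX hX1) (by rw [mul_inv_cancel_left]) hw (hY ▸ hYw)
      rw [mul_inv_cancel_left] at hXw'
      exact ⟨q', w', hw', hXw', by rw [List.length_cons]; omega⟩

theorem ell_prod_le (hΔ : S.Δ ≠ 1) {ss : List G} (hss : ∀ s ∈ ss, S.IsSimple s) :
    S.ell ss.prod ≤ ss.length := by
  obtain ⟨q, w, hw, hprod, hlen⟩ := S.exists_normalWord_of_simples hΔ hss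
  rw [S.ell_eq_length hw (by rw [hprod, zpow_natCast])]
  omega

theorem ell_inv_mul_le (hΔ : S.Δ ≠ 1) {Q u : G} (hQ : S.nfInf Q = 0) (hu : u ∈ S.P)
    (huQ : S.le u Q) : S.ell (u⁻¹ * Q) ≤ S.ell Q := by
  rw [← S.prod_nfWord_of_nfInf_eq_zero hQ] at huQ ⊢
  obtain ⟨ts, hts, hlen, hprod⟩ := S.exists_simples_prod_eq_inv_mul
    (fun a ha => (S.nf_factors Q a ha).1) hu huQ
  rw [← hprod, S.prod_nfWord_of_nfInf_eq_zero hQ]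
  exact (S.ell_prod_le hΔ hts).trans hlen

theorem isSimple_conj_delta (hft : S.FiniteType) (ha : S.IsSimple a) :
    S.IsSimple (MulAut.conj S.Δ a) := by
  -- `b ↦ Δ⁻¹ b Δ` injects the finite set of simples into itself, hence is onto
  have hbij := (Set.Finite.injOn_iff_bijOn_of_mapsTo hft (f := fun b => S.Δ⁻¹ * b * S.Δ)
    fun b hb => S.isSimple_conj_delta_inv hb).1 fun b _ c _ h => by simpa using h
  obtain ⟨b, hb, rfl⟩ := hbij.surjOn ha
  simpa [mul_assoc] using hb

theorem conj_delta_mem (hft : S.FiniteType) (hΔ : S.Δ ≠ 1) (ha : a ∈ S.P) :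
    MulAut.conj S.Δ a ∈ S.P := by
  obtain ⟨w, hw, rfl⟩ := S.exists_simples_prod_eq hΔ ha
  rw [map_list_prod]
  exact S.prod_mem fun b hb => by
    obtain ⟨c, hc, rfl⟩ := List.mem_map.1 hb
    exact (S.isSimple_conj_delta hft (hw c hc)).1

theorem conj_delta_zpow_mem (hft : S.FiniteType) (m : ℤ) (ha : a ∈ S.P) :
    MulAut.conj (S.Δ ^ m) a ∈ S.P := by
  by_cases hΔ : S.Δ = 1
  · simpa [hΔ] using ha
  induction m using Int.induction_on with
  | zero => simpa using ha
  | succ n ih =>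
    rw [add_comm, zpow_add, zpow_one, map_mul, MulAut.mul_apply]
    exact S.conj_delta_mem hft hΔ ih
  | pred n ih =>
    rw [sub_eq_neg_add, zpow_add, zpow_neg_one, map_mul, MulAut.mul_apply, MulAut.conj_apply,
      inv_inv]
    exact S.conj_mem _ ih

theorem conj_delta_zpow_neg_conj (m : ℤ) (a : G) :
    MulAut.conj (S.Δ ^ (-m)) (MulAut.conj (S.Δ ^ m) a) = a := by
  simp [zpow_neg]

theorem conj_delta_zpow_delta (m : ℤ) : MulAut.conj (S.Δ ^ m) S.Δ = S.Δ := by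
  rw [MulAut.conj_apply, ((Commute.refl S.Δ).zpow_left m).eq, mul_inv_cancel_right]

theorem conj_delta_zpow_le_iff (hft : S.FiniteType) (m : ℤ) :
    S.le (MulAut.conj (S.Δ ^ m) a) (MulAut.conj (S.Δ ^ m) b) ↔ S.le a b := by
  have key : ∀ (m : ℤ) {a b : G}, S.le a b →
      S.le (MulAut.conj (S.Δ ^ m) a) (MulAut.conj (S.Δ ^ m) b) := fun m a b h => by
    rw [GarsideStructure.le, ← map_inv, ← map_mul]
    exact S.conj_delta_zpow_mem hft m h
  refine ⟨fun h => ?_, key m⟩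
  simpa only [S.conj_delta_zpow_neg_conj] using key (-m) h

theorem conj_delta_zpow_wedge (hft : S.FiniteType) (m : ℤ) (a b : G) :
    MulAut.conj (S.Δ ^ m) (S.wedge a b) =
      S.wedge (MulAut.conj (S.Δ ^ m) a) (MulAut.conj (S.Δ ^ m) b) := by
  refine (S.wedge_eq_of_forall_le ((S.conj_delta_zpow_le_iff hft m).2 (S.wedge_le_left a b))
    ((S.conj_delta_zpow_le_iff hft m).2 (S.wedge_le_right a b)) fun d hda hdb => ?_).symm
  rw [← S.conj_delta_zpow_neg_conj (-m) d, neg_neg] at hda hdb ⊢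
  rw [S.conj_delta_zpow_le_iff hft] at hda hdb ⊢
  exact S.le_wedge _ _ _ hda hdb

theorem isSimple_conj_delta_zpow (hft : S.FiniteType) (m : ℤ) (ha : S.IsSimple a) :
    S.IsSimple (MulAut.conj (S.Δ ^ m) a) :=
  ⟨S.conj_delta_zpow_mem hft m ha.1, by
    simpa only [S.conj_delta_zpow_delta] using (S.conj_delta_zpow_le_iff hft m).2 ha.2⟩

theorem isAtom'_conj_delta_zpow (hft : S.FiniteType) (m : ℤ) (ha : S.IsAtom' a) :
    S.IsAtom' (MulAut.conj (S.Δ ^ m) a) := by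
  refine ⟨S.conj_delta_zpow_mem hft m ha.1, by simpa using ha.2.1, ?_⟩
  rintro ⟨b, c, hb, hb1, hc, hc1, hbc⟩
  refine ha.2.2 ⟨MulAut.conj (S.Δ ^ (-m)) b, MulAut.conj (S.Δ ^ (-m)) c,
    S.conj_delta_zpow_mem hft _ hb, by simpa using hb1, S.conj_delta_zpow_mem hft _ hc,
    by simpa using hc1, ?_⟩
  rw [← map_mul, ← hbc, S.conj_delta_zpow_neg_conj]

/-- The factor `A_{i+1} = τ^{-(i+1)}(∂c)` of the paper, for `B_{i+1} = c`. -/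
def shiftedDl (i : ℕ) (c : G) : G := S.Δ ^ (i + 1) * c⁻¹ * (S.Δ ^ i)⁻¹

theorem shiftedDl_mul_delta_pow_mul (i : ℕ) (c : G) :
    S.shiftedDl i c * S.Δ ^ i * c = S.Δ ^ (i + 1) := by
  simp [shiftedDl]

theorem shiftedDl_eq_conj (i : ℕ) (c : G) :
    S.shiftedDl i c = MulAut.conj (S.Δ ^ ((i : ℤ) + 1)) (S.dl c) := by
  rw [shiftedDl, MulAut.conj_apply, GarsideStructure.dl, zpow_add_one, zpow_natCast, ← pow_succ]
  group

theorem dl_shiftedDl (i : ℕ) (c : G) :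
    S.dl (S.shiftedDl i c) = MulAut.conj (S.Δ ^ (i : ℤ)) c := by
  rw [shiftedDl, MulAut.conj_apply, GarsideStructure.dl, zpow_natCast, pow_succ]
  group

theorem isSimple_shiftedDl (hft : S.FiniteType) (i : ℕ) {c : G} (hc : S.IsSimple c) :
    S.IsSimple (S.shiftedDl i c) :=
  S.shiftedDl_eq_conj i c ▸ S.isSimple_conj_delta_zpow hft _ (S.isSimple_dl hc)

theorem shiftedDl_ne_one {c : G} (hc : c ≠ S.Δ) (i : ℕ) : S.shiftedDl i c ≠ 1 := by
  intro h
  have := S.shiftedDl_mul_delta_pow_mul i c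
  rw [h, one_mul, pow_succ] at this
  exact hc (mul_left_cancel this)

theorem shiftedDl_ne_delta {c : G} (hc : c ≠ 1) (i : ℕ) : S.shiftedDl i c ≠ S.Δ := by
  intro h
  have := S.shiftedDl_mul_delta_pow_mul i c
  rw [h, pow_succ', mul_eq_left] at this
  exact hc this

theorem leftWeighted_shiftedDl_succ_iff (hft : S.FiniteType) (i : ℕ) {a b : G}
    (ha : S.IsSimple a) (hb : S.IsSimple b) :
    S.LeftWeighted (S.shiftedDl (i + 1) b) (S.shiftedDl i a) ↔ S.LeftWeighted a b := by
  rw [S.leftWeighted_iff (S.isSimple_shiftedDl hft _ hb) (S.isSimple_shiftedDl hft _ ha).1,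
    S.leftWeighted_iff ha hb.1, S.dl_shiftedDl, S.shiftedDl_eq_conj, Nat.cast_succ,
    ← S.conj_delta_zpow_wedge hft, map_eq_one_iff _ (MulEquiv.injective _), S.wedge_comm]

theorem prod_reverse_mapIdx_shiftedDl (cs : List G) :
    (cs.mapIdx S.shiftedDl).reverse.prod = S.Δ ^ cs.length * cs.prod⁻¹ := by
  induction cs using List.reverseRecOn with
  | nil => simp
  | append_singleton cs c ih =>
    rw [List.mapIdx_append_one, List.reverse_append, List.prod_append, ih]
    simp [shiftedDl, mul_assoc]

theorem isChain_reverse_mapIdx_shiftedDl (hft : S.FiniteType) {cs : List G}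
    (hcs : ∀ c ∈ cs, S.IsSimple c) (hchain : cs.IsChain S.LeftWeighted) :
    (cs.mapIdx S.shiftedDl).reverse.IsChain S.LeftWeighted := by
  rw [List.isChain_reverse, List.isChain_iff_getElem]
  intro i hi
  simp only [List.getElem_mapIdx]
  rw [List.length_mapIdx] at hi
  exact (S.leftWeighted_shiftedDl_succ_iff hft i (hcs _ (List.getElem_mem _))
    (hcs _ (List.getElem_mem _))).2 (hchain.getElem i hi)

theorem leftWeighted_self_of_squareFree (hsf : S.SquareFree) {z : G} (hz : S.IsAtom' z) :
    S.LeftWeighted z z := by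
  have hzs := S.isSimple_of_isAtom' hz
  rw [S.leftWeighted_iff hzs hz.1]
  rcases S.eq_one_or_eq_of_le_isAtom' hz (S.wedge_mem hz.1 (S.isSimple_dl hzs).1)
    (S.wedge_le_left _ _) with h | h
  · exact h
  · have hzdl : S.le (S.wedge z (S.dl z)) (S.dl z) := S.wedge_le_right z (S.dl z)
    rw [h] at hzdl
    have hzz : S.le (z * z) S.Δ := (S.le_dl_iff).1 hzdl
    exact absurd ⟨1, z, (z * z)⁻¹ * S.Δ, S.one_mem, hz, hzz, by group⟩
      (hsf S.Δ S.isSimple_delta)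

theorem commute_of_isAtom'_delta (hΔ : S.IsAtom' S.Δ) (g h : G) : Commute g h := by
  -- the only simples are `1` and `Δ`, so `G` is generated by `Δ`
  have hcyc : (⊤ : Subgroup G) ≤ Subgroup.zpowers S.Δ := by
    rw [← S.simples_generate, Subgroup.closure_le]
    rintro a ⟨ha, haΔ⟩
    rcases S.eq_one_or_eq_of_le_isAtom' hΔ ha haΔ with rfl | rfl
    exacts [Subgroup.one_mem _, Subgroup.mem_zpowers _]
  obtain ⟨m, rfl⟩ := Subgroup.mem_zpowers_iff.1 (hcyc (Subgroup.mem_top g))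
  obtain ⟨m', rfl⟩ := Subgroup.mem_zpowers_iff.1 (hcyc (Subgroup.mem_top h))
  exact (Commute.refl S.Δ).zpow_zpow m m'

variable {S} {x y : G} {k l m : ℕ} {X Q x₁ y₁ : G}

theorem lenQ_le {Z : G} (hZ : Z ∈ Qset S x y k l m) (hXZ : IsConj X Z) :
    lenQ S x y k l X ≤ m :=
  Nat.sInf_le ⟨Z, hZ, hXZ⟩

theorem lenQ_eq_zero_of_isAtom'_delta (hΔ : S.IsAtom' S.Δ) (hX : X ∈ Qset S x y k l m) :
    lenQ S x y k l X = 0 := by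
  obtain ⟨P, x₁, y₁, -, hx₁, hcx, hy₁, hcy, rfl⟩ := hX
  refine Nat.le_zero.1 (lenQ_le ⟨1, x₁, y₁, S.ell_one.le, hx₁, hcx, hy₁, hcy, ?_⟩ (.refl _))
  rw [(S.commute_of_isAtom'_delta hΔ P⁻¹ _).eq]
  group

variable (S) in
/-- A positive conjugator exhibiting `X ∈ 𝒬_m`. -/
structure QWitness (x y : G) (k l m : ℕ) (X Q x₁ y₁ : G) : Prop where
  mem : Q ∈ S.P
  ell_le : S.ell Q ≤ m
  isAtom'_left : S.IsAtom' x₁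
  isConj_left : IsConj x x₁
  isAtom'_right : S.IsAtom' y₁
  isConj_right : IsConj y y₁
  eq : X = Q⁻¹ * x₁ ^ k * Q * y₁ ^ l

theorem QWitness.lenQ_le_ell (hW : S.QWitness x y k l m X Q x₁ y₁) :
    lenQ S x y k l X ≤ S.ell Q :=
  lenQ_le ⟨Q, x₁, y₁, le_rfl, hW.isAtom'_left, hW.isConj_left, hW.isAtom'_right,
    hW.isConj_right, hW.eq⟩ (.refl _)

theorem exists_qWitness (hft : S.FiniteType) (hX : X ∈ Qset S x y k l m) :
    ∃ Q x₁ y₁, S.QWitness x y k l m X Q x₁ y₁ := by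
  obtain ⟨P, x₀, y₁, hP, hx₀, hcx, hy₁, hcy, rfl⟩ := hX
  -- move the `Δ`-power of `P = Δ^p Q` onto `x₀`
  set p := S.nfInf P
  have hPQ : P = S.Δ ^ p * (S.nfWord P).prod := S.nf_prod P
  refine ⟨(S.nfWord P).prod, MulAut.conj (S.Δ ^ (-p)) x₀, y₁,
    ⟨(S.isNormalWord_nfWord P).prod_mem, ?_, S.isAtom'_conj_delta_zpow hft _ hx₀,
      hcx.trans (isConj_iff.2 ⟨_, rfl⟩), hy₁, hcy, ?_⟩⟩
  · rwa [S.ell_eq_length (p := 0) (S.isNormalWord_nfWord P) (by simp)]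
  · rw [← map_pow, MulAut.conj_apply, zpow_neg, inv_inv]
    conv_lhs => rw [hPQ]
    group

theorem QWitness.inv_mul {u : G} (hW : S.QWitness x y k l m X Q x₁ y₁) (huQ : S.le u Q)
    (hatom : S.IsAtom' (MulAut.conj u⁻¹ x₁)) (hell : S.ell (u⁻¹ * Q) ≤ m) :
    S.QWitness x y k l m X (u⁻¹ * Q) (MulAut.conj u⁻¹ x₁) y₁ where
  mem := huQ
  ell_le := hell
  isAtom'_left := hatom
  isConj_left := hW.isConj_left.trans (isConj_iff.2 ⟨_, rfl⟩)
  isAtom'_right := hW.isAtom'_right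
  isConj_right := hW.isConj_right
  eq := by
    rw [← map_pow, MulAut.conj_apply, hW.eq]
    group

variable (S) in
def IsMinQWitness (x y : G) (k l m : ℕ) (X Q x₁ y₁ : G) : Prop :=
  S.QWitness x y k l m X Q x₁ y₁ ∧
    ∀ Q' x' y', S.QWitness x y k l m X Q' x' y' → S.norm Q ≤ S.norm Q'

theorem exists_isMinQWitness (hft : S.FiniteType) (hX : X ∈ Qset S x y k l m) :
    ∃ Q x₁ y₁, S.IsMinQWitness x y k l m X Q x₁ y₁ := by
  classical
  obtain ⟨Q, x₁, y₁, hW⟩ := exists_qWitness hft hX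
  have hN : ∃ N Q x₁ y₁, S.QWitness x y k l m X Q x₁ y₁ ∧ S.norm Q = N :=
    ⟨_, Q, x₁, y₁, hW, rfl⟩
  obtain ⟨Q, x₁, y₁, hW, hQ⟩ := Nat.find_spec hN
  exact ⟨Q, x₁, y₁, hW, fun Q' x' y' hW' => hQ ▸ Nat.find_min' hN ⟨Q', x', y', hW', rfl⟩⟩

theorem IsMinQWitness.eq_one_of_le (hhom : S.Homogeneous)
    (h : S.IsMinQWitness x y k l m X Q x₁ y₁) {u : G} (hu : u ∈ S.P) (huQ : S.le u Q)
    (hatom : S.IsAtom' (MulAut.conj u⁻¹ x₁)) (hell : S.ell (u⁻¹ * Q) ≤ m) : u = 1 := by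
  by_contra hu1
  have hle := h.2 _ _ _ (h.1.inv_mul huQ hatom hell)
  have hlt := S.norm_lt_norm_mul hhom hu hu1 huQ
  rw [mul_inv_cancel_left] at hlt
  omega

theorem IsMinQWitness.nfInf_eq_zero (hft : S.FiniteType) (hhom : S.Homogeneous)
    (h : S.IsMinQWitness x y k l m X Q x₁ y₁) : S.nfInf Q = 0 := by
  have hΔ := S.delta_ne_one_of_isAtom' h.1.isAtom'_left
  have hw := S.isNormalWord_nfWord Q
  refine le_antisymm (not_lt.1 fun hpos => hΔ (h.eq_one_of_le hhom S.Δ_mem ?_ ?_ ?_))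
    (S.nfInf_nonneg hΔ h.1.mem)
  · rw [S.nf_prod Q]
    exact S.delta_le_delta_zpow_mul hpos hw.prod_mem
  · rw [← zpow_neg_one]
    exact S.isAtom'_conj_delta_zpow hft _ h.1.isAtom'_left
  · rw [S.ell_eq_length (p := S.nfInf Q - 1) hw]
    · exact h.1.ell_le
    · conv_lhs => rw [S.nf_prod Q]
      group

theorem IsMinQWitness.not_le (hft : S.FiniteType) (hhom : S.Homogeneous)
    (h : S.IsMinQWitness x y k l m X Q x₁ y₁) : ¬ S.le x₁ Q := fun hxQ =>
  have hx := h.1.isAtom'_left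
  hx.2.1 (h.eq_one_of_le hhom hx.1 hxQ (by simpa [MulAut.conj_apply] using hx)
    ((S.ell_inv_mul_le (S.delta_ne_one_of_isAtom' hx) (h.nfInf_eq_zero hft hhom) hx.1
      hxQ).trans h.1.ell_le))

theorem IsMinQWitness.wedge_dl_eq_one (hft : S.FiniteType) (hsym : S.IsSymmetric)
    (hhom : S.Homogeneous) (h : S.IsMinQWitness x y k l m X Q x₁ y₁) :
    S.wedge Q (S.dl x₁) = 1 := by
  set t := S.wedge Q (S.dl x₁)
  have hx := h.1.isAtom'_left
  have hxs := S.isSimple_of_isAtom' hx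
  have ht : S.IsSimple t := ⟨S.wedge_mem h.1.mem (S.isSimple_dl hxs).1,
    S.le_trans (S.wedge_le_right _ _) (S.isSimple_dl hxs).2⟩
  have hxt : S.IsSimple (x₁ * t) :=
    ⟨S.mul_mem hx.1 ht.1, (S.le_dl_iff).1 (S.wedge_le_right _ _)⟩
  -- by symmetry `t` is also a prefix of `x₁ t`, so `t⁻¹ x₁ t` is positive
  have htxt : S.le t (x₁ * t) :=
    (hsym t _ ht hxt).2 (by simpa [GarsideStructure.ges] using hx.1)
  have hpos : MulAut.conj t⁻¹ x₁ ∈ S.P := by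
    simpa [MulAut.conj_apply, GarsideStructure.le, mul_assoc] using htxt
  have hatom := (S.isAtom'_iff_of_semiconjBy hhom (a := t)
    (by simp [SemiconjBy, mul_assoc]) ht.1 hpos hx.1).2 hx
  exact h.eq_one_of_le hhom ht.1 (S.wedge_le_left _ _) hatom
    ((S.ell_inv_mul_le (S.delta_ne_one_of_isAtom' hx) (h.nfInf_eq_zero hft hhom) ht.1
      (S.wedge_le_left _ _)).trans h.1.ell_le)

theorem QWitness.leftWeighted_getLast (hsym : S.IsSymmetric) (hhom : S.Homogeneous)
    (hW : S.QWitness x y k l m X Q x₁ y₁) (hinf : S.nfInf Q = 0)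
    (hlen : S.ell Q ≤ lenQ S x y k l X) (hne : S.nfWord Q ≠ []) :
    S.LeftWeighted ((S.nfWord Q).getLast hne) y₁ := by
  set C := (S.nfWord Q).getLast hne
  have hC := (S.nf_factors Q C (List.getLast_mem hne)).1
  have hy := hW.isAtom'_right
  rw [S.leftWeighted_iff hC hy.1]
  rcases S.eq_one_or_eq_of_le_isAtom' hy (S.wedge_mem hy.1 (S.isSimple_dl hC).1)
    (S.wedge_le_left _ _) with h | h
  · exact h
  exfalso
  have hydl : S.le (S.wedge y₁ (S.dl C)) (S.dl C) := S.wedge_le_right _ _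
  rw [h] at hydl
  have hCy : S.IsSimple (C * y₁) := ⟨S.mul_mem hC.1 hy.1, (S.le_dl_iff).1 hydl⟩
  -- by symmetry `C y₁ C⁻¹` is positive
  have hpos : MulAut.conj C y₁ ∈ S.P := (hsym C _ hC hCy).1 (S.le_mul_of_mem hy.1)
  have hatom := (S.isAtom'_iff_of_semiconjBy hhom (a := C)
    (by simp [SemiconjBy, MulAut.conj_apply]) hC.1 hy.1 hpos).1 hy
  -- conjugating by `C` moves it from the end of `Q` onto `y₁`, so `C X C⁻¹ ∈ 𝒬_{ℓ(Q)-1}`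
  set P := (S.nfWord Q).dropLast.prod
  have hQ : Q = P * C := by
    rw [← List.prod_concat, List.concat_eq_append, List.dropLast_append_getLast,
      S.prod_nfWord_of_nfInf_eq_zero hinf]
  have hP : S.ell P ≤ S.ell Q - 1 := by
    rw [S.ell_eq_length (p := 0) (S.isNormalWord_nfWord Q).dropLast
      (by rw [zpow_zero, one_mul]), List.length_dropLast, ell]
  have hZ : MulAut.conj C X = P⁻¹ * x₁ ^ k * P * (MulAut.conj C y₁) ^ l := by
    rw [← map_pow, MulAut.conj_apply, MulAut.conj_apply, hW.eq, hQ]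
    group
  have hlt : lenQ S x y k l X ≤ S.ell Q - 1 := lenQ_le ⟨P, x₁, _, hP, hW.isAtom'_left,
    hW.isConj_left, hatom, hW.isConj_right.trans (isConj_iff.2 ⟨C, rfl⟩), hZ⟩
    (isConj_iff.2 ⟨C, rfl⟩)
  have : 0 < S.ell Q := List.length_pos_of_ne_nil hne
  omega

theorem IsMinQWitness.wedge_head_eq_one (hft : S.FiniteType) (hhom : S.Homogeneous)
    (h : S.IsMinQWitness x y k l m X Q x₁ y₁) (hne : S.nfWord Q ≠ []) :
    S.wedge x₁ ((S.nfWord Q).head hne) = 1 := by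
  have hx := h.1.isAtom'_left
  have hC := (S.nf_factors Q _ (List.head_mem hne)).1
  refine (S.eq_one_or_eq_of_le_isAtom' hx (S.wedge_mem hx.1 hC.1)
    (S.wedge_le_left _ _)).resolve_right fun hxC => h.not_le hft hhom ?_
  exact S.le_trans (hxC ▸ S.wedge_le_right _ _)
    (S.nfWord_head_le (h.nfInf_eq_zero hft hhom) hne)

theorem IsMinQWitness.leftWeighted_head (hft : S.FiniteType) (hsym : S.IsSymmetric)
    (hhom : S.Homogeneous) (h : S.IsMinQWitness x y k l m X Q x₁ y₁)
    (hne : S.nfWord Q ≠ []) : S.LeftWeighted x₁ ((S.nfWord Q).head hne) := by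
  have hx := S.isSimple_of_isAtom' h.1.isAtom'_left
  have hC := (S.nf_factors Q _ (List.head_mem hne)).1
  rw [S.leftWeighted_iff hx hC.1]
  refine S.wedge_eq_one_of_le hC.1 (S.isSimple_dl hx).1 ?_ (h.wedge_dl_eq_one hft hsym hhom)
  exact S.nfWord_head_le (h.nfInf_eq_zero hft hhom) hne

theorem isNormalWord_conj_mul (hft : S.FiniteType) {cs : List G} (hcs : S.IsNormalWord cs)
    (hne : cs ≠ []) (hx : S.IsSimple x₁ ∧ x₁ ≠ 1 ∧ x₁ ≠ S.Δ)
    (hy : S.IsSimple y₁ ∧ y₁ ≠ 1 ∧ y₁ ≠ S.Δ) (hk : 1 ≤ k) (hl : 1 ≤ l)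
    (hxx : 2 ≤ k → S.LeftWeighted x₁ x₁) (hyy : 2 ≤ l → S.LeftWeighted y₁ y₁)
    (hxC : S.wedge x₁ (cs.head hne) = 1) (hCx : S.LeftWeighted x₁ (cs.head hne))
    (hCy : S.LeftWeighted (cs.getLast hne) y₁) :
    S.IsNormalWord ((cs.mapIdx S.shiftedDl).reverse ++
      (List.replicate k x₁ ++ (cs ++ List.replicate l y₁))) := by
  have hsimple := fun c hc => (hcs.1 c hc).1
  refine ⟨?_, ?_⟩
  · simp only [List.mem_append, List.mem_reverse, List.mem_mapIdx, List.mem_replicate]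
    rintro a (⟨i, hi, rfl⟩ | ⟨-, rfl⟩ | ha | ⟨-, rfl⟩)
    · have hc := hcs.1 _ (List.getElem_mem hi)
      exact ⟨S.isSimple_shiftedDl hft i hc.1, S.shiftedDl_ne_one hc.2.2 i,
        S.shiftedDl_ne_delta hc.2.1 i⟩
    exacts [hx, hcs.1 a ha, hy]
  obtain ⟨c, t, rfl⟩ := List.exists_cons_of_ne_nil hne
  obtain ⟨k, rfl⟩ := Nat.exists_eq_add_of_le' hk
  obtain ⟨l, rfl⟩ := Nat.exists_eq_add_of_le' hl
  refine List.IsChain.append (S.isChain_reverse_mapIdx_shiftedDl hft hsimple hcs.2)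
    (List.IsChain.append (isChain_replicate_of_two_le hxx)
      (List.IsChain.append hcs.2 (isChain_replicate_of_two_le hyy) ?_) ?_) ?_
  · simpa [List.replicate_succ, List.getLast?_eq_some_getLast (List.cons_ne_nil c t)] using hCy
  · simpa [List.getLast?_replicate] using hCx
  · -- the last factor of the `A`-part is `Δ c⁻¹`, whose complement is `c`
    simp only [List.getLast?_reverse, List.mapIdx_cons, List.head?_cons, List.replicate_succ,
      List.cons_append, Option.mem_def, Option.some.injEq, forall_eq']
    rw [S.leftWeighted_iff (S.isSimple_shiftedDl hft 0 (hsimple c List.mem_cons_self)) hx.1.1,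
      S.dl_shiftedDl, Nat.cast_zero, zpow_zero, map_one, MulAut.one_apply]
    exact hxC

theorem conj_mul_eq_delta_zpow_mul_prod (cs : List G) (x₁ y₁ : G) (k l : ℕ) :
    cs.prod⁻¹ * x₁ ^ k * cs.prod * y₁ ^ l = S.Δ ^ (-(cs.length : ℤ)) *
      ((cs.mapIdx S.shiftedDl).reverse ++
        (List.replicate k x₁ ++ (cs ++ List.replicate l y₁))).prod := by
  rw [List.prod_append, S.prod_reverse_mapIdx_shiftedDl, List.prod_append, List.prod_append,
    List.prod_replicate, List.prod_replicate, zpow_neg, zpow_natCast]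
  group

theorem IsMinQWitness.nf_eq (hft : S.FiniteType) (hsym : S.IsSymmetric)
    (hhom : S.Homogeneous) (hk : 1 ≤ k) (hl : 1 ≤ l) (hsf : 2 ≤ max k l → S.SquareFree)
    (hΔ : ¬ S.IsAtom' S.Δ) (h : S.IsMinQWitness x y k l (lenQ S x y k l X) X Q x₁ y₁)
    (hne : S.nfWord Q ≠ []) :
    S.nfInf X = -((S.nfWord Q).length : ℤ) ∧
      S.nfWord X = ((S.nfWord Q).mapIdx S.shiftedDl).reverse ++
        (List.replicate k x₁ ++ (S.nfWord Q ++ List.replicate l y₁)) := by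
  have hinf := h.nfInf_eq_zero hft hhom
  have hfactor : ∀ z, S.IsAtom' z → S.IsSimple z ∧ z ≠ 1 ∧ z ≠ S.Δ := fun z hz =>
    ⟨S.isSimple_of_isAtom' hz, hz.2.1, fun h => hΔ (h ▸ hz)⟩
  have hword := S.isNormalWord_conj_mul hft (S.isNormalWord_nfWord Q) hne
    (hfactor _ h.1.isAtom'_left) (hfactor _ h.1.isAtom'_right) hk hl
    (fun h2 => S.leftWeighted_self_of_squareFree (hsf (le_max_of_le_left h2)) h.1.isAtom'_left)
    (fun h2 => S.leftWeighted_self_of_squareFree (hsf (le_max_of_le_right h2)) h.1.isAtom'_right)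
    (h.wedge_head_eq_one hft hhom hne) (h.leftWeighted_head hft hsym hhom hne)
    (h.1.leftWeighted_getLast hsym hhom hinf h.1.ell_le hne)
  refine S.nf_eq hword ?_
  rw [← S.conj_mul_eq_delta_zpow_mul_prod, S.prod_nfWord_of_nfInf_eq_zero hinf]
  exact h.1.eq

end GarsideStructureNF

theorem statement11_general {G : Type*} [Group G] (S : GarsideStructureNF G)
    (hft : S.FiniteType) (hsym : S.IsSymmetric) (hhom : S.Homogeneous)
    (k l : ℕ) (hk : 1 ≤ k) (hl : 1 ≤ l) (hsf : 2 ≤ max k l → S.SquareFree)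
    (x y : G) (X : G)
    (hX : X ∈ Qmin S x y k l X) (hn : 0 < lenQ S x y k l X) :
    ∃ (x₁ y₁ : G) (A B : Fin (lenQ S x y k l X) → G),
      S.IsAtom' x₁ ∧ IsConj x x₁ ∧ S.IsAtom' y₁ ∧ IsConj y y₁ ∧
      (∀ i, S.IsSimple (A i) ∧ S.IsSimple (B i)) ∧
      (∀ i : Fin (lenQ S x y k l X),
        A i * S.Δ ^ (i : ℕ) * B i = S.Δ ^ ((i : ℕ) + 1)) ∧
      S.nfInf X = -(lenQ S x y k l X : ℤ) ∧
      S.nfWord X = (List.ofFn A).reverse ++ List.replicate k x₁ ++ List.ofFn B ++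
        List.replicate l y₁ := by
  obtain ⟨Q, x₁, y₁, hmin⟩ := GarsideStructureNF.exists_isMinQWitness hft hX.1
  have hW := hmin.1
  have hr : (S.nfWord Q).length = lenQ S x y k l X := le_antisymm hW.ell_le hW.lenQ_le_ell
  have hΔ : ¬ S.IsAtom' S.Δ := fun h =>
    hn.ne' (GarsideStructureNF.lenQ_eq_zero_of_isAtom'_delta h hX.1)
  obtain ⟨hinfX, hwordX⟩ :=
    hmin.nf_eq hft hsym hhom hk hl hsf hΔ (List.ne_nil_of_length_pos (hr ▸ hn))
  rw [← hr]
  refine ⟨x₁, y₁, fun i => S.shiftedDl i ((S.nfWord Q).get i), (S.nfWord Q).get,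
    hW.isAtom'_left, hW.isConj_left, hW.isAtom'_right, hW.isConj_right, fun i => ?_,
    fun i => S.shiftedDl_mul_delta_pow_mul i _, hinfX, ?_⟩
  · have hc := (S.nf_factors Q _ (List.get_mem _ i)).1
    exact ⟨S.isSimple_shiftedDl hft i hc, hc⟩
  · rw [hwordX, List.mapIdx_eq_ofFn, List.ofFn_get, List.append_assoc, List.append_assoc]

/-- **Lemma 3.3** (Orevkov): in a symmetric homogeneous Garside structure of finite type
(square free when `max(k,l) ≥ 2`), if `X ∈ 𝒬_min(X)` and `n = len_𝒬(X) > 0`, then the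
left normal form of `X` is `δ^{-n} · A_n ⋯ A₁ · x₁^k · B₁ ⋯ B_n · y₁^l` with atoms
`x₁ ∈ x^G`, `y₁ ∈ y^G` and simple `A_i, B_i` with `A_i δ^{i-1} B_i = δ^i`. -/
theorem statement11 {G : Type*} [Group G] (S : GarsideStructureNF G)
    (hft : S.FiniteType) (hsym : S.IsSymmetric) (hhom : S.Homogeneous)
    (k l : ℕ) (hk : 1 ≤ k) (hl : 1 ≤ l) (hsf : 2 ≤ max k l → S.SquareFree)
    (x y : G) (hx : S.IsAtom' x) (hy : S.IsAtom' y) (X : G)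
    (hXprod : ∃ u v : G, IsConj (x ^ k) u ∧ IsConj (y ^ l) v ∧ X = u * v)
    (hX : X ∈ Qmin S x y k l X) (hn : 0 < lenQ S x y k l X) :
    ∃ (x₁ y₁ : G) (A B : Fin (lenQ S x y k l X) → G),
      S.IsAtom' x₁ ∧ IsConj x x₁ ∧ S.IsAtom' y₁ ∧ IsConj y y₁ ∧
      (∀ i, S.IsSimple (A i) ∧ S.IsSimple (B i)) ∧
      (∀ i : Fin (lenQ S x y k l X),
        A i * S.Δ ^ (i : ℕ) * B i = S.Δ ^ ((i : ℕ) + 1)) ∧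
      S.nfInf X = -(lenQ S x y k l X : ℤ) ∧
      S.nfWord X = (List.ofFn A).reverse ++ List.replicate k x₁ ++ List.ofFn B ++
        List.replicate l y₁ :=
  statement11_general S hft hsym hhom k l hk hl hsf x y X hX hn
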